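/- Let G be a finite simple graph containing eight distinct vertices v0, h, l1, m, l3, r1, r3, b such that the induced subgraph of G on X = {v0, h, l1, m, l3, r1, r3, b} has edge set exactly the union of the 4-cycle v0 l3 b r3, the 5-cycle v0 h l1 m l3, and the 5-cycle v0 h r1 m r3 (that is, exactly the 11 edges v0l3, l3b, br3, r3v0, v0h, hl1, l1m, ml3, hr1, r1m, mr3), and such that deg_G(v0) = deg_G(l1) = deg_G(r1) = 3 and deg_G(h) = deg_G(m) = deg_G(l3) = deg_G(r3) = deg_G(b) = 4. If G − X is (2,1)-decomposable, then G is (2,1)-decomposable. -/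

import Mathlib

/-!
Extend a decomposition `H'` of `G - X` by the matching `{v₀h, l₁m}`. Delete the vertices of `X`
in the order `v₀, l₁, h, r₁, m, l₃, r₃, b`: when it is deleted, each of them has at most two
neighbours left in `G - E(H)`, since `v₀` and `l₁` have lost their matching edge and every other
vertex has two neighbours deleted before it. Hence any 2-degeneracy order of `G - X - E(H')`
extends to one of `G - E(H)`.
-/

/-- A graph `G` is `d`-degenerate if every nonempty (induced) subgraph has a
vertex of degree at most `d`. -/
def SimpleGraph.DegenerateLE {V : Type*} (G : SimpleGraph V) (d : ℕ) : Prop :=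
  ∀ S : Set V, S.Nonempty → ∃ v ∈ S, (S ∩ G.neighborSet v).ncard ≤ d

def SimpleGraph.IsDecomposable {V : Type*} (G : SimpleGraph V) (d h : ℕ) : Prop :=
  ∃ H : SimpleGraph V, H ≤ G ∧ (∀ v, (H.neighborSet v).ncard ≤ h) ∧
    (G \ H).DegenerateLE d

namespace SimpleGraph

variable {V : Type*}

def DegenerateOn (G : SimpleGraph V) (d : ℕ) (T : Set V) : Prop :=
  ∀ S ⊆ T, S.Nonempty → ∃ v ∈ S, (S ∩ G.neighborSet v).ncard ≤ d

theorem degenerateOn_univ_iff {G : SimpleGraph V} {d : ℕ} :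
    G.DegenerateOn d Set.univ ↔ G.DegenerateLE d :=
  ⟨fun hG S => hG S (Set.subset_univ S), fun hG S _ => hG S⟩

theorem DegenerateOn.mono {G : SimpleGraph V} {d : ℕ} {T T' : Set V} (hT : G.DegenerateOn d T)
    (h : T' ⊆ T) : G.DegenerateOn d T' :=
  fun S hS => hT S (hS.trans h)

theorem DegenerateOn.insert_of_ncard_inter_le {G : SimpleGraph V} {d : ℕ} {T : Set V} {v : V}
    (hT : G.DegenerateOn d T) (hfin : (T ∩ G.neighborSet v).Finite)
    (hv : (T ∩ G.neighborSet v).ncard ≤ d) : G.DegenerateOn d (insert v T) := by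
  intro S hS hne
  by_cases hvS : v ∈ S
  · refine ⟨v, hvS, le_trans (Set.ncard_le_ncard ?_ hfin) hv⟩
    rintro w ⟨hwS, hvw⟩
    exact ⟨(hS hwS).resolve_left hvw.ne', hvw⟩
  · exact hT S (fun w hw => (hS hw).resolve_left (ne_of_mem_of_not_mem hw hvS)) hne

theorem DegenerateOn.insert_of_ncard_neighborSet_le {G H : SimpleGraph V} {d : ℕ}
    {T A : Set V} {v : V}
    (hT : (G \ H).DegenerateOn d T) (hfin : (G.neighborSet v).Finite)
    (hA : A ⊆ G.neighborSet v) (hdeg : (G.neighborSet v).ncard ≤ d + A.ncard)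
    (hAT : ∀ a ∈ A, a ∈ T → H.Adj v a) : (G \ H).DegenerateOn d (insert v T) := by
  have hsub : T ∩ (G \ H).neighborSet v ⊆ G.neighborSet v \ A :=
    fun w ⟨hwT, hGw, hHw⟩ => ⟨hGw, fun hwA => hHw (hAT w hwA hwT)⟩
  refine hT.insert_of_ncard_inter_le (hfin.sdiff.subset hsub) ?_
  calc (T ∩ (G \ H).neighborSet v).ncard ≤ (G.neighborSet v \ A).ncard :=
        Set.ncard_le_ncard hsub hfin.sdiff
    _ = (G.neighborSet v).ncard - A.ncard := Set.ncard_sdiff hA (hfin.subset hA)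
    _ ≤ d := by omega

theorem degenerateOn_of_induce {G : SimpleGraph V} {d : ℕ} {Y : Set V}
    (hG : (G.induce Y).DegenerateLE d) : G.DegenerateOn d Y := by
  intro S hSY ⟨s, hs⟩
  obtain ⟨v, hvS, hv⟩ := hG (Subtype.val ⁻¹' S) ⟨⟨s, hSY hs⟩, hs⟩
  refine ⟨v, hvS, ?_⟩
  have himage : S ∩ G.neighborSet v =
      Subtype.val '' (Subtype.val ⁻¹' S ∩ (G.induce Y).neighborSet v) := by
    ext w
    constructor
    · rintro ⟨hwS, hvw⟩
      exact ⟨⟨w, hSY hwS⟩, ⟨hwS, hvw⟩, rfl⟩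
    · rintro ⟨w, ⟨hwS, hvw⟩, rfl⟩
      exact ⟨hwS, hvw⟩
  rwa [himage, Set.ncard_image_of_injective _ Subtype.val_injective]

theorem ncard_neighborSet_sup_le {G₁ G₂ : SimpleGraph V} {k : ℕ}
    (h₁ : ∀ v, (G₁.neighborSet v).ncard ≤ k) (h₂ : ∀ v, (G₂.neighborSet v).ncard ≤ k)
    (hdisj : Disjoint G₁.support G₂.support) (v : V) :
    ((G₁ ⊔ G₂).neighborSet v).ncard ≤ k := by
  rw [neighborSet_sup]
  by_cases hv : v ∈ G₁.support
  · have : G₂.neighborSet v = ∅ :=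
      Set.eq_empty_of_forall_notMem fun w hw => hdisj.notMem_of_mem_left hv ⟨w, hw⟩
    rw [this, Set.union_empty]
    exact h₁ v
  · have : G₁.neighborSet v = ∅ := Set.eq_empty_of_forall_notMem fun w hw => hv ⟨w, hw⟩
    rw [this, Set.empty_union]
    exact h₂ v

theorem ncard_neighborSet_map_le {W : Type*} {G : SimpleGraph V} {k : ℕ} (f : V ↪ W)
    (hG : ∀ v, (G.neighborSet v).ncard ≤ k) (w : W) :
    ((G.map f).neighborSet w).ncard ≤ k := by
  by_cases hw : w ∈ Set.range f
  · obtain ⟨v, rfl⟩ := hw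
    rw [neighborSet_map, Set.ncard_image_of_injective _ f.injective]
    exact hG v
  · have : (G.map f).neighborSet w = ∅ := Set.eq_empty_of_forall_notMem fun u hu => by
      rw [mem_neighborSet, map_adj] at hu
      obtain ⟨v, _, _, rfl, _⟩ := hu
      exact hw ⟨v, rfl⟩
    simp [this]

theorem support_edge_subset (s t : V) : (edge s t).support ⊆ {s, t} := by
  intro v hv
  obtain ⟨w, hvw⟩ := (mem_support _).1 hv
  rw [edge_adj] at hvw
  rcases hvw with ⟨⟨rfl, -⟩ | ⟨rfl, -⟩, -⟩ <;> simp

theorem support_sup (G₁ G₂ : SimpleGraph V) : (G₁ ⊔ G₂).support = G₁.support ∪ G₂.support := by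
  ext v
  simp [mem_support, exists_or]

theorem ncard_neighborSet_edge_le_one (s t v : V) : ((edge s t).neighborSet v).ncard ≤ 1 := by
  classical
  have hsub : (edge s t).neighborSet v ⊆ {if v = s then t else s} := by
    intro w hw
    rw [mem_neighborSet, edge_adj] at hw
    grind
  exact (Set.ncard_le_ncard hsub).trans (Set.ncard_singleton _).le

theorem support_edge_sup_edge_subset (a b c d : V) :
    (edge a b ⊔ edge c d).support ⊆ {a, b, c, d} := by
  rw [support_sup]
  exact Set.union_subset ((support_edge_subset a b).trans (by simp [Set.insert_subset_iff]))
    ((support_edge_subset c d).trans (by simp [Set.insert_subset_iff]))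

theorem ncard_neighborSet_edge_sup_edge_le_one {a b c d : V}
    (hdisj : Disjoint ({a, b} : Set V) {c, d}) (v : V) :
    ((edge a b ⊔ edge c d).neighborSet v).ncard ≤ 1 :=
  ncard_neighborSet_sup_le (ncard_neighborSet_edge_le_one a b) (ncard_neighborSet_edge_le_one c d)
    (hdisj.mono (support_edge_subset a b) (support_edge_subset c d)) v

theorem induce_compl_sdiff_sup_spanningCoe {G M : SimpleGraph V} {X : Set V}
    (hMX : M.support ⊆ X) (H' : SimpleGraph ↥Xᶜ) :
    (G \ (M ⊔ H'.spanningCoe)).induce Xᶜ = G.induce Xᶜ \ H' := by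
  ext u v
  have hM : ¬M.Adj u v := fun huv => u.2 (hMX ⟨v, huv⟩)
  simp [hM, show (u : V) ∉ X from u.2, show (v : V) ∉ X from v.2]

theorem IsDecomposable.of_induce_compl {G M : SimpleGraph V} {X : Set V} {d k : ℕ}
    (hdec : (G.induce Xᶜ).IsDecomposable d k) (hMG : M ≤ G) (hMX : M.support ⊆ X)
    (hMk : ∀ v, (M.neighborSet v).ncard ≤ k)
    (hext : ∀ H, M ≤ H → (G \ H).DegenerateOn d Xᶜ → (G \ H).DegenerateLE d) :
    G.IsDecomposable d k := by
  obtain ⟨H', hH'G, hH'k, hH'd⟩ := hdec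
  have hsupp : Disjoint M.support H'.spanningCoe.support := by
    rw [support_spanningCoe]
    exact Set.disjoint_left.mpr fun v hvM ⟨u, _, huv⟩ => u.2 (huv ▸ hMX hvM)
  refine ⟨M ⊔ H'.spanningCoe,
    sup_le hMG ((map_monotone _ hH'G).trans (spanningCoe_induce_le G _)),
    ncard_neighborSet_sup_le hMk (ncard_neighborSet_map_le _ hH'k) hsupp,
    hext _ le_sup_left (degenerateOn_of_induce ?_)⟩
  rwa [induce_compl_sdiff_sup_spanningCoe hMX]

theorem DegenerateOn.insert_of_adj {G H : SimpleGraph V} {d : ℕ} {T : Set V} {v a : V}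
    (hT : (G \ H).DegenerateOn d T) (hdeg : (G.neighborSet v).ncard = d + 1)
    (hGa : G.Adj v a) (hHa : H.Adj v a) : (G \ H).DegenerateOn d (insert v T) :=
  hT.insert_of_ncard_neighborSet_le (Set.finite_of_ncard_ne_zero (by omega))
    (Set.singleton_subset_iff.2 hGa) (by rw [hdeg, Set.ncard_singleton])
    (fun _ ha _ => (Set.mem_singleton_iff.1 ha) ▸ hHa)

theorem degenerateOn_compl_pair_of_lightThreeVertex {G H : SimpleGraph V}
    {v₀ h l₁ m l₃ r₁ r₃ b : V} (hne : [v₀, h, l₁, m, l₃, r₁, r₃, b].Pairwise (· ≠ ·))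
    (hE : ({s(v₀, l₃), s(l₃, b), s(b, r₃), s(r₃, v₀), s(v₀, h), s(h, l₁), s(l₁, m),
          s(m, l₃), s(h, r₁), s(r₁, m), s(m, r₃)} : Set (Sym2 V)) ⊆ G.edgeSet)
    (hdh : (G.neighborSet h).ncard = 4) (hdm : (G.neighborSet m).ncard = 4)
    (hdl₃ : (G.neighborSet l₃).ncard = 4) (hdr₁ : (G.neighborSet r₁).ncard = 3)
    (hdr₃ : (G.neighborSet r₃).ncard = 4) (hdb : (G.neighborSet b).ncard = 4)
    (hX : (G \ H).DegenerateOn 2 ({v₀, h, l₁, m, l₃, r₁, r₃, b} : Set V)ᶜ) :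
    (G \ H).DegenerateOn 2 ({v₀, l₁} : Set V)ᶜ := by
  suffices (G \ H).DegenerateOn 2 (insert h (insert r₁ (insert m (insert l₃ (insert r₃
      (insert b ({v₀, h, l₁, m, l₃, r₁, r₃, b} : Set V)ᶜ)))))) by
    refine this.mono fun x hx => ?_
    simp only [Set.mem_compl_iff, Set.mem_insert_iff, Set.mem_singleton_iff] at hx ⊢
    tauto
  simp only [List.pairwise_cons, List.mem_cons, List.not_mem_nil, or_false,
    List.Pairwise.nil, forall_eq_or_imp, forall_eq, and_true, false_imp_iff, implies_true] at hne
  obtain ⟨⟨nv₀h, nv₀l₁, nv₀m, nv₀l₃, nv₀r₁, nv₀r₃, nv₀b⟩, ⟨nhl₁, nhm, nhl₃, nhr₁, nhr₃, nhb⟩,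
    ⟨nl₁m, nl₁l₃, nl₁r₁, nl₁r₃, nl₁b⟩, ⟨nml₃, nmr₁, nmr₃, nmb⟩, ⟨nl₃r₁, nl₃r₃, nl₃b⟩,
    ⟨nr₁r₃, nr₁b⟩, nr₃b⟩ := hne
  have adj : ∀ {x y : V}, s(x, y) ∈ ({s(v₀, l₃), s(l₃, b), s(b, r₃), s(r₃, v₀), s(v₀, h),
      s(h, l₁), s(l₁, m), s(m, l₃), s(h, r₁), s(r₁, m), s(m, r₃)} : Set (Sym2 V)) →
      y ∈ G.neighborSet x := fun hxy => hE hxy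
  have finite_of_ncard_succ :
      ∀ {x : V} {n : ℕ}, (G.neighborSet x).ncard = n + 1 → (G.neighborSet x).Finite :=
    fun hx => Set.finite_of_ncard_ne_zero (by omega)
  have hb := hX.insert_of_ncard_neighborSet_le (A := {l₃, r₃}) (finite_of_ncard_succ hdb)
    (Set.pair_subset (adj (by simp)) (adj (by simp)))
    (by rw [hdb, Set.ncard_pair nl₃r₃]) (by simp)
  have hr₃ := hb.insert_of_ncard_neighborSet_le (A := {v₀, m}) (finite_of_ncard_succ hdr₃)
    (Set.pair_subset (adj (by simp)) (adj (by simp)))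
    (by rw [hdr₃, Set.ncard_pair nv₀m]) (by simp [*])
  have hl₃ := hr₃.insert_of_ncard_neighborSet_le (A := {v₀, m}) (finite_of_ncard_succ hdl₃)
    (Set.pair_subset (adj (by simp)) (adj (by simp)))
    (by rw [hdl₃, Set.ncard_pair nv₀m]) (by simp [*])
  have hm := hl₃.insert_of_ncard_neighborSet_le (A := {l₁, r₁}) (finite_of_ncard_succ hdm)
    (Set.pair_subset (adj (by simp)) (adj (by simp)))
    (by rw [hdm, Set.ncard_pair nl₁r₁]) (by simp [*, nl₃r₁.symm])
  have hr₁ := hm.insert_of_ncard_neighborSet_le (A := {h}) (finite_of_ncard_succ hdr₁)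
    (Set.singleton_subset_iff.2 (adj (by simp)))
    (by rw [hdr₁, Set.ncard_singleton]) (by simp [*])
  exact hr₁.insert_of_ncard_neighborSet_le (A := {v₀, l₁}) (finite_of_ncard_succ hdh)
    (Set.pair_subset (adj (by simp)) (adj (by simp)))
    (by rw [hdh, Set.ncard_pair nv₀l₁]) (by simp [*])

theorem degenerateLE_sdiff_of_lightThreeVertex {G H : SimpleGraph V}
    {v₀ h l₁ m l₃ r₁ r₃ b : V} (hne : [v₀, h, l₁, m, l₃, r₁, r₃, b].Pairwise (· ≠ ·))
    (hE : ({s(v₀, l₃), s(l₃, b), s(b, r₃), s(r₃, v₀), s(v₀, h), s(h, l₁), s(l₁, m),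
          s(m, l₃), s(h, r₁), s(r₁, m), s(m, r₃)} : Set (Sym2 V)) ⊆ G.edgeSet)
    (hdv₀ : (G.neighborSet v₀).ncard = 3) (hdh : (G.neighborSet h).ncard = 4)
    (hdl₁ : (G.neighborSet l₁).ncard = 3) (hdm : (G.neighborSet m).ncard = 4)
    (hdl₃ : (G.neighborSet l₃).ncard = 4) (hdr₁ : (G.neighborSet r₁).ncard = 3)
    (hdr₃ : (G.neighborSet r₃).ncard = 4) (hdb : (G.neighborSet b).ncard = 4)
    (hMH : edge v₀ h ⊔ edge l₁ m ≤ H)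
    (hX : (G \ H).DegenerateOn 2 ({v₀, h, l₁, m, l₃, r₁, r₃, b} : Set V)ᶜ) :
    (G \ H).DegenerateLE 2 := by
  have hHv₀h : H.Adj v₀ h := ((edge_le_iff H).1 (le_sup_left.trans hMH)).resolve_left
    (List.pairwise_iff_forall_sublist.1 hne (by simp))
  have hHl₁m : H.Adj l₁ m := ((edge_le_iff H).1 (le_sup_right.trans hMH)).resolve_left
    (List.pairwise_iff_forall_sublist.1 hne (by simp))
  have hall := ((degenerateOn_compl_pair_of_lightThreeVertex hne hE hdh hdm hdl₃ hdr₁ hdr₃ hdb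
    hX).insert_of_adj hdl₁ (hE (show s(l₁, m) ∈ _ by simp)) hHl₁m).insert_of_adj hdv₀
    (hE (show s(v₀, h) ∈ _ by simp)) hHv₀h
  refine degenerateOn_univ_iff.1 (hall.mono fun x _ => ?_)
  simp only [Set.mem_insert_iff, Set.mem_compl_iff, Set.mem_singleton_iff]
  tauto

end SimpleGraph

theorem statement10_general {V : Type*} (G : SimpleGraph V)
    (v₀ h l₁ m l₃ r₁ r₃ b : V)
    (hne : [v₀, h, l₁, m, l₃, r₁, r₃, b].Pairwise (· ≠ ·))
    (hind : ∀ x ∈ ({v₀, h, l₁, m, l₃, r₁, r₃, b} : Set V),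
      ∀ y ∈ ({v₀, h, l₁, m, l₃, r₁, r₃, b} : Set V),
      (G.Adj x y ↔ s(x, y) ∈
        ({s(v₀, l₃), s(l₃, b), s(b, r₃), s(r₃, v₀), s(v₀, h), s(h, l₁), s(l₁, m),
          s(m, l₃), s(h, r₁), s(r₁, m), s(m, r₃)} : Set (Sym2 V))))
    (hdv₀ : (G.neighborSet v₀).ncard = 3) (hdh : (G.neighborSet h).ncard = 4)
    (hdl₁ : (G.neighborSet l₁).ncard = 3) (hdm : (G.neighborSet m).ncard = 4)
    (hdl₃ : (G.neighborSet l₃).ncard = 4) (hdr₁ : (G.neighborSet r₁).ncard = 3)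
    (hdr₃ : (G.neighborSet r₃).ncard = 4) (hdb : (G.neighborSet b).ncard = 4)
    (hdec : (G.induce (({v₀, h, l₁, m, l₃, r₁, r₃, b} : Set V)ᶜ)).IsDecomposable 2 1) :
    G.IsDecomposable 2 1 := by
  have hE : ({s(v₀, l₃), s(l₃, b), s(b, r₃), s(r₃, v₀), s(v₀, h), s(h, l₁), s(l₁, m),
      s(m, l₃), s(h, r₁), s(r₁, m), s(m, r₃)} : Set (Sym2 V)) ⊆ G.edgeSet := by
    rintro e (rfl | rfl | rfl | rfl | rfl | rfl | rfl | rfl | rfl | rfl | rfl) <;>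
      exact (hind _ (by simp) _ (by simp)).2 (by simp)
  have hdisj : Disjoint ({v₀, h} : Set V) {l₁, m} := by
    simp only [List.pairwise_cons, List.mem_cons, forall_eq_or_imp] at hne
    simp only [Set.disjoint_insert_left, Set.disjoint_singleton_left, Set.mem_insert_iff,
      Set.mem_singleton_iff]
    tauto
  refine hdec.of_induce_compl (M := SimpleGraph.edge v₀ h ⊔ SimpleGraph.edge l₁ m)
    (sup_le (G.edge_le_iff.2 (.inr (hE (show s(v₀, h) ∈ _ by simp))))
      (G.edge_le_iff.2 (.inr (hE (show s(l₁, m) ∈ _ by simp)))))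
    ((SimpleGraph.support_edge_sup_edge_subset ..).trans (by simp [Set.insert_subset_iff]))
    (SimpleGraph.ncard_neighborSet_edge_sup_edge_le_one hdisj) fun H hMH hH => ?_
  exact SimpleGraph.degenerateLE_sdiff_of_lightThreeVertex hne hE hdv₀ hdh hdl₁ hdm hdl₃ hdr₁
    hdr₃ hdb hMH hH

/-- Reducible 'light 3-vertex' configuration of Figure 4(d): a 4-cycle
`v₀ l₃ b r₃` together with the 5-cycles `v₀ h l₁ m l₃` and `v₀ h r₁ m r₃`
sharing the vertex `m`, inducing exactly these eleven edges. -/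
theorem statement10 {V : Type*} [Fintype V] (G : SimpleGraph V)
    (v₀ h l₁ m l₃ r₁ r₃ b : V)
    (hne : [v₀, h, l₁, m, l₃, r₁, r₃, b].Pairwise (· ≠ ·))
    (hind : ∀ x ∈ ({v₀, h, l₁, m, l₃, r₁, r₃, b} : Set V),
      ∀ y ∈ ({v₀, h, l₁, m, l₃, r₁, r₃, b} : Set V),
      (G.Adj x y ↔ s(x, y) ∈
        ({s(v₀, l₃), s(l₃, b), s(b, r₃), s(r₃, v₀), s(v₀, h), s(h, l₁), s(l₁, m),
          s(m, l₃), s(h, r₁), s(r₁, m), s(m, r₃)} : Set (Sym2 V))))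
    (hdv₀ : (G.neighborSet v₀).ncard = 3) (hdh : (G.neighborSet h).ncard = 4)
    (hdl₁ : (G.neighborSet l₁).ncard = 3) (hdm : (G.neighborSet m).ncard = 4)
    (hdl₃ : (G.neighborSet l₃).ncard = 4) (hdr₁ : (G.neighborSet r₁).ncard = 3)
    (hdr₃ : (G.neighborSet r₃).ncard = 4) (hdb : (G.neighborSet b).ncard = 4)
    (hdec : (G.induce (({v₀, h, l₁, m, l₃, r₁, r₃, b} : Set V)ᶜ)).IsDecomposable 2 1) :
    G.IsDecomposable 2 1 :=
  statement10_general G v₀ h l₁ m l₃ r₁ r₃ b hne hind hdv₀ hdh hdl₁ hdm hdl₃ hdr₁ hdr₃ hdb hdec
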